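/- arXiv:2210.03859 — 2 statements merged into one kernel-verified Lean document; each statement's English description precedes it below -/
import Mathlib

section
/- Let Ḡ > 0, D̄ ∈ ℝ, α > 0, ζ ≥ 0 with D̄ + ζ > 0, reals q₀, q₁, and priors π₀, π₁ > 0 with π₀ + π₁ = 1. The function h(θ) = π₀ Φ((−Ḡ + α(q₀ − q₁ − 2θ))/(2√α √(D̄+ζ))) + π₁ Φ((−Ḡ − α(q₀ − q₁ − 2θ))/(2√α √(D̄+ζ))), θ ∈ ℝ, attains its global minimum at the unique minimizer θ* = (1/2)(q₀ − q₁) − ((D̄+ζ)/Ḡ)·log(π₁/π₀). -/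
open MeasureTheory ProbabilityTheory Filter Matrix
open scoped BigOperators

noncomputable section

/-- The positive spiked index set `𝕀₁ = {1,…,r₁}` (as integers). -/
def I1 (r₁ : ℕ) : Finset ℤ := Finset.Icc 1 (r₁ : ℤ)

/-- The negative spiked index set `𝕀₂ = {−r₂,…,−1}` (as integers). -/
def I2 (r₂ : ℕ) : Finset ℤ := Finset.Icc (-(r₂ : ℤ)) (-1)

/-- 0-based position in `Fin p` of the spiked index `j ∈ 𝕀` :
for `j > 0` it is the `j`-th largest (position `j−1`), and for `j < 0`
it is position `p + j` (i.e. the 1-based position `p + 1 + j`). -/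
def spikeIdx (p : ℕ) (hp : 0 < p) (j : ℤ) : Fin p :=
  ⟨((if 0 < j then j - 1 else j) % (p : ℤ)).toNat, by
    have hp' : (0 : ℤ) < (p : ℤ) := by exact_mod_cast hp
    have h1 := Int.emod_nonneg (if 0 < j then j - 1 else j) (ne_of_gt hp')
    have h2 := Int.emod_lt_of_pos (if 0 < j then j - 1 else j) hp'
    omega⟩

/-- `a_j = (λ_j² − J)/(λ_j(λ_j + J))`. -/
def aCoef (J : ℝ) (lam : ℤ → ℝ) (j : ℤ) : ℝ := (lam j ^ 2 - J) / (lam j * (lam j + J))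

/-- `γ_{i,j} = γ_i λ_j/(1 + γ_i λ_j)`. -/
def gamCoef (lam : ℤ → ℝ) (γ : ℝ) (j : ℤ) : ℝ := γ * lam j / (1 + γ * lam j)

/-- `Ḡ` with general per-index weights `g1` (on `𝕀₁`) and `g2` (on `𝕀₂`). -/
def GbarGen (J : ℝ) (lam b g1 g2 : ℤ → ℝ) (r₁ r₂ : ℕ) : ℝ :=
  1 - ∑ j ∈ I1 r₁, aCoef J lam j * b j * g1 j
    - ∑ j ∈ I2 r₂, aCoef J lam j * b j * g2 j

/-- `D̄` with general per-index weights `g1` (on `𝕀₁`) and `g2` (on `𝕀₂`). -/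
def DbarGen (J : ℝ) (lam b g1 g2 : ℤ → ℝ) (r₁ r₂ : ℕ) : ℝ :=
  1 + ∑ j ∈ I1 r₁ ∪ I2 r₂, lam j * b j
    - 2 * (∑ j ∈ I1 r₁, (lam j + 1) * aCoef J lam j * b j * g1 j
         + ∑ j ∈ I2 r₂, (lam j + 1) * aCoef J lam j * b j * g2 j)
    + (∑ j ∈ I1 r₁, aCoef J lam j * b j * (lam j * aCoef J lam j + 1) * g1 j ^ 2
     + ∑ j ∈ I2 r₂, aCoef J lam j * b j * (lam j * aCoef J lam j + 1) * g2 j ^ 2)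

/-- `Ḡ(γ₁,γ₂)`. -/
def Gbar (J : ℝ) (lam b : ℤ → ℝ) (r₁ r₂ : ℕ) (γ₁ γ₂ : ℝ) : ℝ :=
  GbarGen J lam b (gamCoef lam γ₁) (gamCoef lam γ₂) r₁ r₂

/-- `D̄(γ₁,γ₂)`. -/
def Dbar (J : ℝ) (lam b : ℤ → ℝ) (r₁ r₂ : ℕ) (γ₁ γ₂ : ℝ) : ℝ :=
  DbarGen J lam b (gamCoef lam γ₁) (gamCoef lam γ₂) r₁ r₂

/-- `γ_{1,j}` re-parametrized by `ω₁`. -/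
def gamOm1 (lam : ℤ → ℝ) (ω₁ : ℝ) (j : ℤ) : ℝ :=
  ω₁ * lam j / ((1 - ω₁) * lam 1 + ω₁ * lam j)

/-- `γ_{2,j}` re-parametrized by `ω₂`. -/
def gamOm2 (lam : ℤ → ℝ) (ω₂ : ℝ) (j : ℤ) : ℝ :=
  -(ω₂ * lam j) / ((1 - ω₂) * lam (-1) - ω₂ * lam j)

/-- `G̃(ω₁,ω₂)`. -/
def Gtil (J : ℝ) (lam b : ℤ → ℝ) (r₁ r₂ : ℕ) (ω₁ ω₂ : ℝ) : ℝ :=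
  GbarGen J lam b (gamOm1 lam ω₁) (gamOm2 lam ω₂) r₁ r₂

/-- `D̃(ω₁,ω₂)`. -/
def Dtil (J : ℝ) (lam b : ℤ → ℝ) (r₁ r₂ : ℕ) (ω₁ ω₂ : ℝ) : ℝ :=
  DbarGen J lam b (gamOm1 lam ω₁) (gamOm2 lam ω₂) r₁ r₂

/-- The standard normal cumulative distribution function `Φ`. -/
def stdCDF (x : ℝ) : ℝ := cdf (gaussianReal 0 1) x

/-! The derivative of `h` is a positive multiple of `π₁ φ(v) − π₀ φ(u)`, where `u`, `v` are the two
arguments of `Φ`. Comparing `log π₁ − v²/2` with `log π₀ − u²/2`, the quadratic terms cancel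
(`v² − u²` is linear in `θ`), and the difference is `(Ḡ/(D̄+ζ)) (θ − θ*)`. So `h` strictly
decreases before `θ*` and strictly increases after it. -/

namespace ProbabilityTheory

lemma continuous_gaussianPDFReal (μ : ℝ) (v : NNReal) : Continuous (gaussianPDFReal μ v) := by
  rw [gaussianPDFReal_def]
  fun_prop

lemma cdf_gaussianReal_eq_integral (μ : ℝ) {v : NNReal} (hv : v ≠ 0) (x : ℝ) :
    cdf (gaussianReal μ v) x = ∫ t in Set.Iic x, gaussianPDFReal μ v t := by
  rw [cdf_eq_real, measureReal_def, gaussianReal_apply_eq_integral μ hv,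
    ENNReal.toReal_ofReal (integral_nonneg fun t => gaussianPDFReal_nonneg μ v t)]

lemma hasDerivAt_cdf_gaussianReal (μ : ℝ) {v : NNReal} (hv : v ≠ 0) (x : ℝ) :
    HasDerivAt (fun y => cdf (gaussianReal μ v) y) (gaussianPDFReal μ v x) x := by
  have hint : ∀ a, IntegrableOn (gaussianPDFReal μ v) (Set.Iic a) :=
    fun _ => (integrable_gaussianPDFReal μ v).integrableOn
  have hsplit : ∀ y : ℝ, cdf (gaussianReal μ v) y =
      (∫ t in Set.Iic 0, gaussianPDFReal μ v t) + ∫ t in (0 : ℝ)..y, gaussianPDFReal μ v t := by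
    intro y
    rw [cdf_gaussianReal_eq_integral μ hv,
      ← intervalIntegral.integral_Iic_sub_Iic (hint _) (hint _)]
    ring
  exact (((continuous_gaussianPDFReal μ v).integral_hasStrictDerivAt 0 x).hasDerivAt.const_add
    _).congr_of_eventuallyEq (Eventually.of_forall hsplit)

lemma mul_gaussianPDFReal_zero_one {p : ℝ} (hp : 0 < p) (x : ℝ) :
    p * gaussianPDFReal 0 1 x =
      (Real.sqrt (2 * Real.pi))⁻¹ * Real.exp (Real.log p - x ^ 2 / 2) := by
  rw [Real.exp_sub, Real.exp_log hp, gaussianPDFReal]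
  simp only [NNReal.coe_one, mul_one, sub_zero, neg_div, Real.exp_neg]
  ring

lemma mul_gaussianPDFReal_lt_mul_iff {p q : ℝ} (hp : 0 < p) (hq : 0 < q) (x y : ℝ) :
    p * gaussianPDFReal 0 1 x < q * gaussianPDFReal 0 1 y ↔
      Real.log p - x ^ 2 / 2 < Real.log q - y ^ 2 / 2 := by
  rw [mul_gaussianPDFReal_zero_one hp, mul_gaussianPDFReal_zero_one hq,
    mul_lt_mul_iff_of_pos_left (by positivity), Real.exp_lt_exp]

end ProbabilityTheory

lemma hasDerivAt_stdCDF (x : ℝ) : HasDerivAt stdCDF (gaussianPDFReal 0 1 x) x :=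
  hasDerivAt_cdf_gaussianReal 0 one_ne_zero x

lemma apply_lt_of_deriv_neg_of_deriv_pos {f : ℝ → ℝ} {a x : ℝ} (hf : Differentiable ℝ f)
    (hneg : ∀ y < a, deriv f y < 0) (hpos : ∀ y, a < y → 0 < deriv f y) (hx : x ≠ a) :
    f a < f x := by
  rcases hx.lt_or_gt with hxa | hax
  · have hanti : StrictAntiOn f (Set.Iic a) :=
      strictAntiOn_of_deriv_neg (convex_Iic a) hf.continuous.continuousOn
        fun y hy => hneg y (by rwa [interior_Iic] at hy)
    exact hanti hxa.le Set.self_mem_Iic hxa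
  · have hmono : StrictMonoOn f (Set.Ici a) :=
      strictMonoOn_of_deriv_pos (convex_Ici a) hf.continuous.continuousOn
        fun y hy => hpos y (by rwa [interior_Ici] at hy)
    exact hmono Set.self_mem_Ici hax.le hax

lemma hasDerivAt_intercept_risk (Gb α c q0 q1 pi0 pi1 θ : ℝ) :
    HasDerivAt (fun θ : ℝ =>
        pi0 * stdCDF ((-Gb + α * (q0 - q1 - 2 * θ)) / c)
          + pi1 * stdCDF ((-Gb - α * (q0 - q1 - 2 * θ)) / c))
      (2 * α / c *
        (pi1 * gaussianPDFReal 0 1 ((-Gb - α * (q0 - q1 - 2 * θ)) / c)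
          - pi0 * gaussianPDFReal 0 1 ((-Gb + α * (q0 - q1 - 2 * θ)) / c))) θ := by
  have hs : HasDerivAt (fun θ : ℝ => α * (q0 - q1 - 2 * θ)) (α * -(2 * 1)) θ :=
    (((hasDerivAt_id θ).const_mul 2).const_sub _).const_mul α
  have hu := (hasDerivAt_stdCDF _).comp θ ((hs.const_add (-Gb)).div_const c)
  have hv := (hasDerivAt_stdCDF _).comp θ ((hs.const_sub (-Gb)).div_const c)
  exact ((hu.const_mul pi0).add (hv.const_mul pi1)).congr_deriv (by ring)

lemma log_weight_sub_sq_gap {Gb α K : ℝ} (hGb : 0 < Gb) (hα : 0 < α) (hK : 0 < K)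
    {pi0 pi1 : ℝ} (hpi0 : 0 < pi0) (hpi1 : 0 < pi1) (q0 q1 θ : ℝ) :
    (Real.log pi1 - ((-Gb - α * (q0 - q1 - 2 * θ)) / (2 * Real.sqrt α * Real.sqrt K)) ^ 2 / 2)
      - (Real.log pi0 - ((-Gb + α * (q0 - q1 - 2 * θ)) / (2 * Real.sqrt α * Real.sqrt K)) ^ 2 / 2)
      = Gb / K * (θ - ((1 / 2) * (q0 - q1) - (K / Gb) * Real.log (pi1 / pi0))) := by
  rw [Real.log_div hpi1.ne' hpi0.ne', div_pow, div_pow, mul_pow, mul_pow,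
    Real.sq_sqrt hα.le, Real.sq_sqrt hK.le]
  field_simp
  ring

theorem optimal_intercept_general
    (Gb Db α ζ q0 q1 : ℝ)
    (hGb : 0 < Gb) (hα : 0 < α) (hDζ : 0 < Db + ζ)
    (pi0 pi1 : ℝ) (hpi0 : 0 < pi0) (hpi1 : 0 < pi1)
    (h : ℝ → ℝ)
    (hh : ∀ θ : ℝ, h θ =
      pi0 * stdCDF ((-Gb + α * (q0 - q1 - 2 * θ))
        / (2 * Real.sqrt α * Real.sqrt (Db + ζ)))
      + pi1 * stdCDF ((-Gb - α * (q0 - q1 - 2 * θ))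
        / (2 * Real.sqrt α * Real.sqrt (Db + ζ))))
    (θs : ℝ)
    (hθs : θs = (1 / 2) * (q0 - q1) - ((Db + ζ) / Gb) * Real.log (pi1 / pi0)) :
    (∀ θ : ℝ, h θs ≤ h θ) ∧ (∀ θ : ℝ, θ ≠ θs → h θs < h θ) := by
  suffices hstrict : ∀ θ, θ ≠ θs → h θs < h θ from
    ⟨fun θ => (eq_or_ne θ θs).elim (fun hθ => hθ ▸ le_rfl) fun hθ => (hstrict θ hθ).le, hstrict⟩
  intro θ hθ
  obtain rfl : h = _ := funext hh
  have hder := hasDerivAt_intercept_risk Gb α (2 * Real.sqrt α * Real.sqrt (Db + ζ)) q0 q1 pi0 pi1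
  have hgap := log_weight_sub_sq_gap hGb hα hDζ hpi0 hpi1 q0 q1
  rw [← hθs] at hgap
  have hslope : 0 < 2 * α / (2 * Real.sqrt α * Real.sqrt (Db + ζ)) := by positivity
  refine apply_lt_of_deriv_neg_of_deriv_pos (fun y => (hder y).differentiableAt)
    (fun y hy => ?_) (fun y hy => ?_) hθ
  · rw [(hder y).deriv]
    refine mul_neg_of_pos_of_neg hslope (sub_neg.2 ?_)
    rw [mul_gaussianPDFReal_lt_mul_iff hpi1 hpi0, ← sub_neg, hgap]
    exact mul_neg_of_pos_of_neg (by positivity) (sub_neg.2 hy)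
  · rw [(hder y).deriv]
    refine mul_pos hslope (sub_pos.2 ?_)
    rw [mul_gaussianPDFReal_lt_mul_iff hpi0 hpi1, ← sub_pos, hgap]
    exact mul_pos (by positivity) (sub_pos.2 hy)

theorem optimal_intercept
    (Gb Db α ζ q0 q1 : ℝ)
    (hGb : 0 < Gb) (hα : 0 < α) (hζ : 0 ≤ ζ) (hDζ : 0 < Db + ζ)
    (pi0 pi1 : ℝ) (hpi0 : 0 < pi0) (hpi1 : 0 < pi1) (hpisum : pi0 + pi1 = 1)
    (h : ℝ → ℝ)
    (hh : ∀ θ : ℝ, h θ =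
      pi0 * stdCDF ((-Gb + α * (q0 - q1 - 2 * θ))
        / (2 * Real.sqrt α * Real.sqrt (Db + ζ)))
      + pi1 * stdCDF ((-Gb - α * (q0 - q1 - 2 * θ))
        / (2 * Real.sqrt α * Real.sqrt (Db + ζ))))
    (θs : ℝ)
    (hθs : θs = (1 / 2) * (q0 - q1) - ((Db + ζ) / Gb) * Real.log (pi1 / pi0)) :
    (∀ θ : ℝ, h θs ≤ h θ) ∧ (∀ θ : ℝ, θ ≠ θs → h θs < h θ) :=
  optimal_intercept_general Gb Db α ζ q0 q1 hGb hα hDζ pi0 pi1 hpi0 hpi1 h hh θs hθs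
end
end

section
/- Under the spiked-model setup, for each fixed (γ₁,γ₂) ∈ 𝔸, the quantity (n₀⁻¹ + n₁⁻¹)·tr(H̃ Σ H̃ Σ) converges to σ⁴(J₀ + J₁) almost surely as n → ∞. -/
open MeasureTheory ProbabilityTheory Filter Matrix
open scoped BigOperators

noncomputable section

/-!
On `𝔸` every `1 + γᵢλⱼ` is nonzero, so by orthonormality of the sample eigenvectors
`H̃ = I + ∑ⱼ (-γᵢλⱼ / (1 + γᵢλⱼ)) uⱼuⱼᵀ`, and likewise `Σ / σ² = I + ∑ⱼ λⱼ vⱼvⱼᵀ`: both are the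
identity plus a perturbation of rank `r₁ + r₂` whose nuclear norm is bounded independently of `n`
and of the sample. Since the nuclear norm of `AB - I` is at most
`(1 + ‖A - I‖₁)(1 + ‖B - I‖₁) - 1`, this gives `tr(H̃ΣH̃Σ) = σ⁴p + O(1)` deterministically, and
multiplying by `n₀⁻¹ + n₁⁻¹ → 0` leaves `σ⁴(p/n₀ + p/n₁) → σ⁴(J₀ + J₁)` for every sample.
-/

open Topology

section NuclearNorm

variable {m : Type*} [Fintype m]

theorem abs_dotProduct_le_one {a b : m → ℝ} (ha : a ⬝ᵥ a ≤ 1) (hb : b ⬝ᵥ b ≤ 1) :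
    |a ⬝ᵥ b| ≤ 1 := by
  have hcs : (a ⬝ᵥ b) ^ 2 ≤ (a ⬝ᵥ a) * (b ⬝ᵥ b) := by
    simpa only [dotProduct, sq] using Finset.sum_mul_sq_le_sq_mul_sq Finset.univ a b
  have ha0 : 0 ≤ a ⬝ᵥ a := Finset.sum_nonneg fun i _ => mul_self_nonneg (a i)
  rw [← sq_le_one_iff_abs_le_one]
  nlinarith

/-- The nuclear norm of `X` is at most `W`, phrased through a witnessing decomposition. -/
def NuclearNormLE (X : Matrix m m ℝ) (W : ℝ) : Prop :=
  ∃ (ι : Type) (_ : Fintype ι) (c : ι → ℝ) (a b : ι → m → ℝ),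
    (∀ i, a i ⬝ᵥ a i ≤ 1) ∧ (∀ i, b i ⬝ᵥ b i ≤ 1) ∧ ∑ i, |c i| ≤ W ∧
      X = ∑ i, c i • vecMulVec (a i) (b i)

namespace NuclearNormLE

variable {X Y : Matrix m m ℝ} {W W' : ℝ}

theorem sum_smul_vecMulVec {ι : Type} (s : Finset ι) (c : ι → ℝ) {a b : ι → m → ℝ}
    (ha : ∀ j ∈ s, a j ⬝ᵥ a j ≤ 1) (hb : ∀ j ∈ s, b j ⬝ᵥ b j ≤ 1) :
    NuclearNormLE (∑ j ∈ s, c j • vecMulVec (a j) (b j)) (∑ j ∈ s, |c j|) :=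
  ⟨s, inferInstance, fun j => c j, fun j => a j, fun j => b j, fun j => ha j j.2,
    fun j => hb j j.2, (Finset.sum_coe_sort s fun j => |c j|).le,
    (Finset.sum_coe_sort s fun j => c j • vecMulVec (a j) (b j)).symm⟩

theorem abs_trace_le (h : NuclearNormLE X W) : |X.trace| ≤ W := by
  obtain ⟨ι, _, c, a, b, ha, hb, hc, rfl⟩ := h
  simp only [trace_sum, trace_smul, trace_vecMulVec, smul_eq_mul]
  calc |∑ i, c i * (a i ⬝ᵥ b i)| ≤ ∑ i, |c i| * |a i ⬝ᵥ b i| := by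
        simpa only [abs_mul] using Finset.abs_sum_le_sum_abs (fun i => c i * (a i ⬝ᵥ b i)) _
    _ ≤ ∑ i, |c i| := Finset.sum_le_sum fun i _ =>
        mul_le_of_le_one_right (abs_nonneg _) (abs_dotProduct_le_one (ha i) (hb i))
    _ ≤ W := hc

theorem add (hX : NuclearNormLE X W) (hY : NuclearNormLE Y W') :
    NuclearNormLE (X + Y) (W + W') := by
  obtain ⟨ι, _, c, a, b, ha, hb, hc, rfl⟩ := hX
  obtain ⟨κ, _, c', a', b', ha', hb', hc', rfl⟩ := hY
  refine ⟨ι ⊕ κ, inferInstance, Sum.elim c c', Sum.elim a a', Sum.elim b b', ?_, ?_, ?_, ?_⟩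
  · rintro (i | k) <;> simp [ha, ha']
  · rintro (i | k) <;> simp [hb, hb']
  · simpa only [Fintype.sum_sum_type, Sum.elim_inl, Sum.elim_inr] using add_le_add hc hc'
  · simp only [Fintype.sum_sum_type, Sum.elim_inl, Sum.elim_inr]

theorem mul (hX : NuclearNormLE X W) (hY : NuclearNormLE Y W') :
    NuclearNormLE (X * Y) (W * W') := by
  obtain ⟨ι, _, c, a, b, ha, hb, hc, rfl⟩ := hX
  obtain ⟨κ, _, c', a', b', ha', hb', hc', rfl⟩ := hY
  refine ⟨ι × κ, inferInstance, fun q => c q.1 * c' q.2 * (b q.1 ⬝ᵥ a' q.2),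
    fun q => a q.1, fun q => b' q.2, fun q => ha q.1, fun q => hb' q.2, ?_, ?_⟩
  · calc ∑ q : ι × κ, |c q.1 * c' q.2 * (b q.1 ⬝ᵥ a' q.2)|
          ≤ ∑ q : ι × κ, |c q.1| * |c' q.2| := Finset.sum_le_sum fun q _ => by
            rw [abs_mul, abs_mul]
            exact mul_le_of_le_one_right (by positivity)
              (abs_dotProduct_le_one (hb q.1) (ha' q.2))
      _ = (∑ i, |c i|) * ∑ k, |c' k| := by rw [Fintype.sum_mul_sum, Fintype.sum_prod_type]
      _ ≤ W * W' := mul_le_mul hc hc' (Finset.sum_nonneg fun _ _ => abs_nonneg _)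
            ((Finset.sum_nonneg fun _ _ => abs_nonneg _).trans hc)
  · rw [Fintype.sum_mul_sum, Fintype.sum_prod_type]
    refine Finset.sum_congr rfl fun i _ => Finset.sum_congr rfl fun k _ => ?_
    rw [smul_mul_smul_comm, vecMulVec_mul_vecMulVec, vecMulVec_smul, smul_smul]

variable [DecidableEq m] {a b : ℝ}

theorem mul_sub_one (hX : NuclearNormLE (X - 1) a) (hY : NuclearNormLE (Y - 1) b) :
    NuclearNormLE (X * Y - 1) ((1 + a) * (1 + b) - 1) := by
  rw [show X * Y - 1 = X - 1 + (Y - 1) + (X - 1) * (Y - 1) by noncomm_ring,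
    show (1 + a) * (1 + b) - 1 = a + b + a * b by ring]
  exact (hX.add hY).add (hX.mul hY)

theorem abs_trace_sub_card_le (h : NuclearNormLE (X - 1) W) :
    |X.trace - Fintype.card m| ≤ W := by
  simpa only [trace_sub, trace_one] using h.abs_trace_le

end NuclearNormLE

theorem abs_trace_mul_mul_mul_sub_card_le [DecidableEq m] {X Y : Matrix m m ℝ} {a b : ℝ}
    (hX : NuclearNormLE (X - 1) a) (hY : NuclearNormLE (Y - 1) b) :
    |(X * Y * X * Y).trace - Fintype.card m| ≤ ((1 + a) * (1 + b)) ^ 2 - 1 :=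
  (((hX.mul_sub_one hY).mul_sub_one hX).mul_sub_one hY).abs_trace_sub_card_le.trans_eq
    (by ring)

end NuclearNorm

section Orthonormal

variable {m ι : Type*} [Fintype m] [DecidableEq ι] {s : Finset ι} {w : ι → m → ℝ}

theorem sum_smul_vecMulVec_mul_sum_smul_vecMulVec
    (hw : ∀ j ∈ s, ∀ k ∈ s, w j ⬝ᵥ w k = if j = k then 1 else 0) (d e : ι → ℝ) :
    (∑ j ∈ s, d j • vecMulVec (w j) (w j)) * (∑ j ∈ s, e j • vecMulVec (w j) (w j))
      = ∑ j ∈ s, (d j * e j) • vecMulVec (w j) (w j) := by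
  rw [Finset.sum_mul_sum]
  refine Finset.sum_congr rfl fun j hj => ?_
  rw [Finset.sum_eq_single_of_mem j hj fun k hk hkj => by
    rw [smul_mul_smul_comm, vecMulVec_mul_vecMulVec, hw j hj k hk, if_neg hkj.symm]; simp]
  rw [smul_mul_smul_comm, vecMulVec_mul_vecMulVec, hw j hj j hj, if_pos rfl, one_smul]

theorem inv_one_add_sum_smul_vecMulVec [DecidableEq m]
    (hw : ∀ j ∈ s, ∀ k ∈ s, w j ⬝ᵥ w k = if j = k then 1 else 0) {d : ι → ℝ}
    (hd : ∀ j ∈ s, 1 + d j ≠ 0) :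
    (1 + ∑ j ∈ s, d j • vecMulVec (w j) (w j))⁻¹
      = 1 + ∑ j ∈ s, (-d j / (1 + d j)) • vecMulVec (w j) (w j) := by
  refine inv_eq_right_inv ?_
  set D := ∑ j ∈ s, d j • vecMulVec (w j) (w j)
  set E := ∑ j ∈ s, (-d j / (1 + d j)) • vecMulVec (w j) (w j)
  rw [show (1 + D) * (1 + E) = 1 + (D + E + D * E) by noncomm_ring,
    sum_smul_vecMulVec_mul_sum_smul_vecMulVec hw, ← Finset.sum_add_distrib,
    ← Finset.sum_add_distrib, add_eq_left]
  refine Finset.sum_eq_zero fun j hj => ?_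
  rw [← add_smul, ← add_smul]
  convert zero_smul ℝ _
  field_simp [hd j hj]
  ring

end Orthonormal

section Limits

theorem tendsto_atTop_of_tendsto_div_natCast {p : ℕ → ℝ} {J : ℝ}
    (hp : Tendsto (fun n => p n / n) atTop (𝓝 J)) (hJ : 0 < J) : Tendsto p atTop atTop := by
  refine (hp.pos_mul_atTop hJ tendsto_natCast_atTop_atTop).congr' ?_
  filter_upwards [eventually_ne_atTop 0] with n hn
  exact div_mul_cancel₀ _ (Nat.cast_ne_zero.mpr hn)

theorem tendsto_inv_of_tendsto_div {α : Type*} {l : Filter α} {p q : α → ℝ} {L : ℝ}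
    (hpq : Tendsto (fun n => p n / q n) l (𝓝 L)) (hp : Tendsto p l atTop) :
    Tendsto (fun n => (q n)⁻¹) l (𝓝 0) := by
  have h := hpq.mul hp.inv_tendsto_atTop
  rw [mul_zero] at h
  refine h.congr' ?_
  filter_upwards [hp.eventually_ne_atTop 0] with n hn
  simp only [Pi.inv_apply]
  field_simp

theorem tendsto_mul_of_abs_sub_mul_le {α : Type*} {l : Filter α} {c t q : α → ℝ} {K L C : ℝ}
    (hc : Tendsto c l (𝓝 0)) (hqc : Tendsto (fun n => q n * c n) l (𝓝 L))
    (ht : ∀ᶠ n in l, |t n - K * q n| ≤ C) :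
    Tendsto (fun n => c n * t n) l (𝓝 (K * L)) := by
  have herr : Tendsto (fun n => c n * (t n - K * q n)) l (𝓝 0) := by
    refine squeeze_zero_norm' ?_ (by simpa using hc.abs.mul_const C)
    filter_upwards [ht] with n hn
    rw [Real.norm_eq_abs, abs_mul]
    exact mul_le_mul_of_nonneg_left hn (abs_nonneg _)
  simpa [mul_sub, mul_comm, mul_left_comm] using (hqc.const_mul K).add herr

end Limits

section SpikedModel

variable {r₁ r₂ : ℕ}

theorem disjoint_I1_I2 : Disjoint (I1 r₁) (I2 r₂) := by
  simp only [I1, I2, Finset.disjoint_left, Finset.mem_Icc]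
  omega

theorem spikeIdx_val {p : ℕ} (hp : 0 < p) (hr : r₁ + r₂ ≤ p) {j : ℤ} (hj : j ∈ I1 r₁ ∪ I2 r₂) :
    ((spikeIdx p hp j : ℕ) : ℤ) = if 0 < j then j - 1 else p + j := by
  simp only [Finset.mem_union, I1, I2, Finset.mem_Icc] at hj
  simp only [spikeIdx]
  split_ifs with hj0
  · rw [Int.emod_eq_of_lt (by omega) (by omega)]
    exact Int.toNat_of_nonneg (by omega)
  · have hmod : (j + p) % (p : ℤ) = j + p := Int.emod_eq_of_lt (by omega) (by omega)
    rw [← Int.add_emod_right, hmod]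
    exact (Int.toNat_of_nonneg (by omega)).trans (add_comm _ _)

theorem spikeIdx_injOn {p : ℕ} (hp : 0 < p) (hr : r₁ + r₂ ≤ p) :
    Set.InjOn (spikeIdx p hp) ↑(I1 r₁ ∪ I2 r₂) := by
  intro j hj k hk hjk
  have hval := congrArg (fun i : Fin p => ((i : ℕ) : ℤ)) hjk
  simp only [spikeIdx_val hp hr hj, spikeIdx_val hp hr hk] at hval
  simp only [Finset.coe_union, Set.mem_union, Finset.mem_coe, I1, I2, Finset.mem_Icc] at hj hk
  split_ifs at hval <;> omega

/-- The eigenvalue of `H̃⁻¹ - I` on `u_j`; the test `0 < j` separates `𝕀₁` from `𝕀₂`. -/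
def spikeScale (γ₁ γ₂ : ℝ) (lam : ℤ → ℝ) (j : ℤ) : ℝ := (if 0 < j then γ₁ else γ₂) * lam j

theorem smul_sum_I1_add_smul_sum_I2 {M : Type*} [AddCommMonoid M] [Module ℝ M]
    (γ₁ γ₂ : ℝ) (lam : ℤ → ℝ) (P : ℤ → M) :
    γ₁ • ∑ j ∈ I1 r₁, lam j • P j + γ₂ • ∑ j ∈ I2 r₂, lam j • P j
      = ∑ j ∈ I1 r₁ ∪ I2 r₂, spikeScale γ₁ γ₂ lam j • P j := by
  rw [Finset.sum_union disjoint_I1_I2, Finset.smul_sum, Finset.smul_sum]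
  congr 1 <;> refine Finset.sum_congr rfl fun j hj => ?_ <;>
    simp only [I1, I2, Finset.mem_Icc] at hj <;>
    rw [smul_smul, spikeScale]
  · rw [if_pos (by omega)]
  · rw [if_neg (by omega)]

theorem one_add_mul_ne_zero_of_ne_abs_inv {γ x : ℝ} (hγ : 0 < γ) (h : γ ≠ |x|⁻¹) :
    1 + γ * x ≠ 0 := by
  intro h0
  have hx : x = -γ⁻¹ := by
    field_simp
    linarith
  rw [hx, abs_neg, abs_of_pos (inv_pos.2 hγ), inv_inv] at h
  exact h rfl

theorem one_add_spikeScale_ne_zero {lam : ℤ → ℝ} {γ₁ γ₂ δ : ℝ} (hγ₁ : 0 < γ₁) (hγ₂ : 0 < γ₂)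
    (hδ : 0 < δ) (hlam : ∀ j ∈ I1 r₁, 0 ≤ lam j) (hγδ : ∀ j ∈ I2 r₂, δ ≤ |γ₂ - |lam j|⁻¹|) :
    ∀ j ∈ I1 r₁ ∪ I2 r₂, 1 + spikeScale γ₁ γ₂ lam j ≠ 0 := by
  intro j hj
  rcases Finset.mem_union.mp hj with hj | hj
  · have hj0 : 0 < j := by simp only [I1, Finset.mem_Icc] at hj; omega
    rw [spikeScale, if_pos hj0]
    nlinarith [hlam j hj]
  · have hj0 : ¬ 0 < j := by simp only [I2, Finset.mem_Icc] at hj; omega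
    rw [spikeScale, if_neg hj0]
    exact one_add_mul_ne_zero_of_ne_abs_inv hγ₂
      (sub_ne_zero.mp (abs_pos.mp (hδ.trans_le (hγδ j hj))))

theorem abs_trace_Htil_Sigma_sub_le {p : ℕ} (hp : 0 < p) (hr : r₁ + r₂ ≤ p) {lam : ℤ → ℝ}
    {γ₁ γ₂ σ2 : ℝ} (hd : ∀ j ∈ I1 r₁ ∪ I2 r₂, 1 + spikeScale γ₁ γ₂ lam j ≠ 0)
    {u : Fin p → Fin p → ℝ} (hu : ∀ i j, u i ⬝ᵥ u j = if i = j then 1 else 0)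
    {v : ℤ → Fin p → ℝ} (hv : ∀ j ∈ I1 r₁ ∪ I2 r₂, v j ⬝ᵥ v j ≤ 1)
    {H Sig : Matrix (Fin p) (Fin p) ℝ}
    (hH : H = (1 + γ₁ • ∑ j ∈ I1 r₁, lam j • vecMulVec (u (spikeIdx p hp j)) (u (spikeIdx p hp j))
      + γ₂ • ∑ j ∈ I2 r₂, lam j • vecMulVec (u (spikeIdx p hp j)) (u (spikeIdx p hp j)))⁻¹)
    (hSig : Sig = σ2 • (1 + ∑ j ∈ I1 r₁ ∪ I2 r₂, lam j • vecMulVec (v j) (v j))) :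
    |(H * Sig * H * Sig).trace - σ2 ^ 2 * p|
      ≤ σ2 ^ 2 * (((1 + ∑ j ∈ I1 r₁ ∪ I2 r₂,
          |-spikeScale γ₁ γ₂ lam j / (1 + spikeScale γ₁ γ₂ lam j)|)
        * (1 + ∑ j ∈ I1 r₁ ∪ I2 r₂, |lam j|)) ^ 2 - 1) := by
  set w := fun j => u (spikeIdx p hp j)
  have hw : ∀ j ∈ I1 r₁ ∪ I2 r₂, ∀ k ∈ I1 r₁ ∪ I2 r₂, w j ⬝ᵥ w k = if j = k then 1 else 0 :=
    fun j hj k hk => by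
      simp only [w, hu, (spikeIdx_injOn hp hr).eq_iff (Finset.mem_coe.2 hj) (Finset.mem_coe.2 hk)]
  have hw1 : ∀ j ∈ I1 r₁ ∪ I2 r₂, w j ⬝ᵥ w j ≤ 1 := fun j hj => (hw j hj j hj).trans_le (by simp)
  have hH1 : NuclearNormLE (H - 1) (∑ j ∈ I1 r₁ ∪ I2 r₂,
      |-spikeScale γ₁ γ₂ lam j / (1 + spikeScale γ₁ γ₂ lam j)|) := by
    rw [hH, add_assoc, smul_sum_I1_add_smul_sum_I2, inv_one_add_sum_smul_vecMulVec hw hd,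
      add_sub_cancel_left]
    exact .sum_smul_vecMulVec _ _ hw1 hw1
  have hSig1 : NuclearNormLE ((1 + ∑ j ∈ I1 r₁ ∪ I2 r₂, lam j • vecMulVec (v j) (v j)) - 1)
      (∑ j ∈ I1 r₁ ∪ I2 r₂, |lam j|) := by
    rw [add_sub_cancel_left]
    exact .sum_smul_vecMulVec _ _ hv hv
  have key := abs_trace_mul_mul_mul_sub_card_le hH1 hSig1
  rw [Fintype.card_fin] at key
  rw [hSig]
  simp only [mul_smul_comm, smul_mul_assoc, smul_smul, trace_smul, smul_eq_mul]
  rw [← sq, ← mul_sub, abs_mul, abs_of_nonneg (sq_nonneg σ2)]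
  exact mul_le_mul_of_nonneg_left key (sq_nonneg σ2)

end SpikedModel

theorem trace_HSigma_limit_general
    {Ω : Type*} [MeasureSpace Ω]
    (pp nn0 nn1 : ℕ → ℕ)
    (hp : ∀ n, 0 < pp n)
    (J0 J1 J : ℝ) (hJ : 0 < J)
    (hlim0 : Tendsto (fun n => (pp n : ℝ) / (nn0 n : ℝ)) atTop (nhds J0))
    (hlim1 : Tendsto (fun n => (pp n : ℝ) / (nn1 n : ℝ)) atTop (nhds J1))
    (hlim : Tendsto (fun n => (pp n : ℝ) / (n : ℝ)) atTop (nhds J))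
    (r₁ r₂ : ℕ) (lam : ℤ → ℝ)
    (hlam1 : ∀ j ∈ I1 r₁, Real.sqrt J < lam j)
    (σ2 : ℝ)
    (v : ∀ n, ℤ → Fin (pp n) → ℝ)
    (hv : ∀ n, ∀ i ∈ I1 r₁ ∪ I2 r₂, ∀ j ∈ I1 r₁ ∪ I2 r₂,
      v n i ⬝ᵥ v n j = if i = j then (1 : ℝ) else 0)
    (Sigm : ∀ n, Matrix (Fin (pp n)) (Fin (pp n)) ℝ)
    (hSig : ∀ n, Sigm n = σ2 • ((1 : Matrix (Fin (pp n)) (Fin (pp n)) ℝ)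
        + ∑ j ∈ I1 r₁ ∪ I2 r₂, lam j • vecMulVec (v n j) (v n j)))
    (u : ∀ n, Ω → Fin (pp n) → Fin (pp n) → ℝ)
    (huorth : ∀ n ω i j, u n ω i ⬝ᵥ u n ω j = if i = j then (1 : ℝ) else 0)
    (M δ : ℝ) (hδ : 0 < δ)
    (Aset : Set (ℝ × ℝ))
    (hAset : Aset = {γ : ℝ × ℝ | 0 < γ.1 ∧ γ.1 < M ∧ 0 < γ.2 ∧ γ.2 < M ∧
      ∀ j ∈ I2 r₂, δ ≤ |γ.2 - |lam j|⁻¹|})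
    (Htil : ∀ n, Ω → ℝ → ℝ → Matrix (Fin (pp n)) (Fin (pp n)) ℝ)
    (hHtil : ∀ n ω γ₁ γ₂, Htil n ω γ₁ γ₂
      = ((1 : Matrix (Fin (pp n)) (Fin (pp n)) ℝ)
        + γ₁ • ∑ j ∈ I1 r₁, lam j • vecMulVec (u n ω (spikeIdx (pp n) (hp n) j))
            (u n ω (spikeIdx (pp n) (hp n) j))
        + γ₂ • ∑ j ∈ I2 r₂, lam j • vecMulVec (u n ω (spikeIdx (pp n) (hp n) j))
            (u n ω (spikeIdx (pp n) (hp n) j)))⁻¹)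
    (γ₁ γ₂ : ℝ) (hγ : (γ₁, γ₂) ∈ Aset) :
    ∀ᵐ ω ∂(ℙ : Measure Ω), Tendsto (fun n =>
      ((nn0 n : ℝ)⁻¹ + (nn1 n : ℝ)⁻¹)
        * (Htil n ω γ₁ γ₂ * Sigm n * Htil n ω γ₁ γ₂ * Sigm n).trace)
      atTop (nhds (σ2 ^ 2 * (J0 + J1))) := by
  obtain ⟨hγ₁, -, hγ₂, -, hγδ⟩ := hAset ▸ hγ
  have hd := one_add_spikeScale_ne_zero hγ₁ hγ₂ hδ
    (fun j hj => (Real.sqrt_nonneg J).trans (hlam1 j hj).le) hγδ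
  have hpp := tendsto_atTop_of_tendsto_div_natCast hlim hJ
  have hinv : Tendsto (fun n => (nn0 n : ℝ)⁻¹ + (nn1 n : ℝ)⁻¹) atTop (𝓝 0) := by
    simpa using (tendsto_inv_of_tendsto_div hlim0 hpp).add (tendsto_inv_of_tendsto_div hlim1 hpp)
  have hratio : Tendsto (fun n => (pp n : ℝ) * ((nn0 n : ℝ)⁻¹ + (nn1 n : ℝ)⁻¹)) atTop
      (𝓝 (J0 + J1)) := by
    simpa only [mul_add, div_eq_mul_inv] using hlim0.add hlim1
  refine ae_of_all _ fun ω => ?_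
  apply tendsto_mul_of_abs_sub_mul_le hinv hratio
  filter_upwards [hpp.eventually_ge_atTop ((r₁ + r₂ : ℕ) : ℝ)] with n hn
  exact abs_trace_Htil_Sigma_sub_le (hp n) (by exact_mod_cast hn) hd (huorth n ω)
    (fun j hj => (hv n j hj j hj).trans_le (by simp)) (hHtil n ω γ₁ γ₂) (hSig n)

theorem trace_HSigma_limit
    {Ω : Type*} [MeasureSpace Ω] [IsProbabilityMeasure (ℙ : Measure Ω)]
    (pp nn0 nn1 : ℕ → ℕ)
    (hsplit : ∀ n, nn0 n + nn1 n = n)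
    (hp : ∀ n, 0 < pp n)
    (J0 J1 J : ℝ) (hJ0 : 0 < J0) (hJ1 : 0 < J1) (hJ : 0 < J) (hJlt : J < 1)
    (hlim0 : Tendsto (fun n => (pp n : ℝ) / (nn0 n : ℝ)) atTop (nhds J0))
    (hlim1 : Tendsto (fun n => (pp n : ℝ) / (nn1 n : ℝ)) atTop (nhds J1))
    (hlim : Tendsto (fun n => (pp n : ℝ) / (n : ℝ)) atTop (nhds J))
    (r₁ r₂ : ℕ) (lam : ℤ → ℝ)
    (hlam1 : ∀ j ∈ I1 r₁, Real.sqrt J < lam j)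
    (hlam2 : ∀ j ∈ I2 r₂, -1 < lam j ∧ lam j < -Real.sqrt J)
    (hanti1 : StrictAntiOn lam (I1 r₁ : Set ℤ))
    (hanti2 : StrictAntiOn lam (I2 r₂ : Set ℤ))
    (σ2 : ℝ) (hσ2 : 0 < σ2)
    (v : ∀ n, ℤ → Fin (pp n) → ℝ)
    (hv : ∀ n, ∀ i ∈ I1 r₁ ∪ I2 r₂, ∀ j ∈ I1 r₁ ∪ I2 r₂,
      v n i ⬝ᵥ v n j = if i = j then (1 : ℝ) else 0)
    (Sigm : ∀ n, Matrix (Fin (pp n)) (Fin (pp n)) ℝ)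
    (hSig : ∀ n, Sigm n = σ2 • ((1 : Matrix (Fin (pp n)) (Fin (pp n)) ℝ)
        + ∑ j ∈ I1 r₁ ∪ I2 r₂, lam j • vecMulVec (v n j) (v n j)))
    (hSigbdd : ∃ C, ∀ n (w : Fin (pp n) → ℝ),
      (Sigm n).mulVec w ⬝ᵥ (Sigm n).mulVec w ≤ C * (w ⬝ᵥ w))
    (μ0 μ1 : ∀ n, Fin (pp n) → ℝ)
    (hμ0 : ∃ C, ∀ n, μ0 n ⬝ᵥ μ0 n ≤ C) (hμ1 : ∃ C, ∀ n, μ1 n ⬝ᵥ μ1 n ≤ C)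
    (Z : ∀ n, Ω → Fin (pp n) → Fin n → ℝ)
    (hZmeas : ∀ n i j, Measurable fun ω => Z n ω i j)
    (hZindep : ∀ n, iIndepFun
      (fun (ij : Fin (pp n) × Fin n) => fun ω => Z n ω ij.1 ij.2) ℙ)
    (hZlaw : ∀ n i j, Measure.map (fun ω => Z n ω i j) ℙ = gaussianReal 0 1)
    (A : ∀ n, Matrix (Fin (pp n)) (Fin (pp n)) ℝ)
    (hA : ∀ n, A n * A n = Sigm n ∧ (A n).IsHermitian)
    (x : ∀ n, Fin n → Ω → Fin (pp n) → ℝ)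
    (hx : ∀ n k ω, x n k ω
      = (if (k : ℕ) < nn0 n then μ0 n else μ1 n) + (A n).mulVec fun i => Z n ω i k)
    (xbar0 xbar1 : ∀ n, Ω → Fin (pp n) → ℝ)
    (hxbar0 : ∀ n ω, xbar0 n ω
      = (nn0 n : ℝ)⁻¹ • ∑ k : Fin n, if (k : ℕ) < nn0 n then x n k ω else 0)
    (hxbar1 : ∀ n ω, xbar1 n ω
      = (nn1 n : ℝ)⁻¹ • ∑ k : Fin n, if (k : ℕ) < nn0 n then 0 else x n k ω)
    (S : ∀ n, Ω → Matrix (Fin (pp n)) (Fin (pp n)) ℝ)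
    (hSdef : ∀ n ω, S n ω = ((n : ℝ) - 2)⁻¹ •
      ∑ k : Fin n, (if (k : ℕ) < nn0 n
        then vecMulVec (x n k ω - xbar0 n ω) (x n k ω - xbar0 n ω)
        else vecMulVec (x n k ω - xbar1 n ω) (x n k ω - xbar1 n ω)))
    (l : ∀ n, Ω → Fin (pp n) → ℝ) (u : ∀ n, Ω → Fin (pp n) → Fin (pp n) → ℝ)
    (huorth : ∀ n ω i j, u n ω i ⬝ᵥ u n ω j = if i = j then (1 : ℝ) else 0)
    (heig : ∀ n ω j, (S n ω).mulVec (u n ω j) = l n ω j • u n ω j)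
    (hmono : ∀ n ω, Antitone (l n ω))
    (M δ : ℝ) (hM : 0 < M) (hδ : 0 < δ)
    (Aset : Set (ℝ × ℝ))
    (hAset : Aset = {γ : ℝ × ℝ | 0 < γ.1 ∧ γ.1 < M ∧ 0 < γ.2 ∧ γ.2 < M ∧
      ∀ j ∈ I2 r₂, δ ≤ |γ.2 - |lam j|⁻¹|})
    (Htil : ∀ n, Ω → ℝ → ℝ → Matrix (Fin (pp n)) (Fin (pp n)) ℝ)
    (hHtil : ∀ n ω γ₁ γ₂, Htil n ω γ₁ γ₂
      = ((1 : Matrix (Fin (pp n)) (Fin (pp n)) ℝ)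
        + γ₁ • ∑ j ∈ I1 r₁, lam j • vecMulVec (u n ω (spikeIdx (pp n) (hp n) j))
            (u n ω (spikeIdx (pp n) (hp n) j))
        + γ₂ • ∑ j ∈ I2 r₂, lam j • vecMulVec (u n ω (spikeIdx (pp n) (hp n) j))
            (u n ω (spikeIdx (pp n) (hp n) j)))⁻¹)
    (γ₁ γ₂ : ℝ) (hγ : (γ₁, γ₂) ∈ Aset) :
    ∀ᵐ ω ∂(ℙ : Measure Ω), Tendsto (fun n =>
      ((nn0 n : ℝ)⁻¹ + (nn1 n : ℝ)⁻¹)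
        * (Htil n ω γ₁ γ₂ * Sigm n * Htil n ω γ₁ γ₂ * Sigm n).trace)
      atTop (nhds (σ2 ^ 2 * (J0 + J1))) :=
  trace_HSigma_limit_general pp nn0 nn1 hp J0 J1 J hJ hlim0 hlim1 hlim r₁ r₂ lam hlam1 σ2 v hv Sigm
    hSig u huorth M δ hδ Aset hAset Htil hHtil γ₁ γ₂ hγ
end
end
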